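/- arXiv:2504.03421 — 2 statements merged into one kernel-verified Lean document; each statement's English description precedes it below -/
import Mathlib

section
/- Let H be a Hilbert space, A : H → H a compact self-adjoint operator, and V ⊆ H a finite-dimensional subspace such that ⟨A g, g⟩ ≥ 0 for all g in the orthogonal complement of V. Then A has at most dim V negative eigenvalues (counted with multiplicity). -/
/-!
On the span `W` of the eigenspaces of `A` for eigenvalues `θ < c`, the eigenspaces are mutually
orthogonal, so `⟪A x, x⟫ = ∑ θ ‖x_θ‖² < c ‖x‖²` for `x ≠ 0`. Hence `W` meets `Vᗮ` only in `0`, the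
orthogonal projection onto `V` is injective on `W`, and the multiplicities of the eigenvalues
below `c`, which add up to dimensions of subspaces of `W`, sum to at most `dim V`.
-/

open RealInnerProductSpace

/-- The number of eigenvalues of `A` smaller than `c`, counted with multiplicity. -/
noncomputable def eigCountBelow {H : Type*} [NormedAddCommGroup H] [InnerProductSpace ℝ H]
    (A : H →L[ℝ] H) (c : ℝ) : ℕ∞ :=
  ∑' θ : {t : ℝ // t < c},
    (Module.finrank ℝ (Module.End.eigenspace (A : H →ₗ[ℝ] H) θ.1) : ℕ∞)

open Module

theorem iSupIndep.finrank_finset_sup {ι K M : Type*} [DivisionRing K] [AddCommGroup M]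
    [Module K M] {E : ι → Submodule K M} [∀ i, FiniteDimensional K (E i)] (hE : iSupIndep E)
    (s : Finset ι) : finrank K (s.sup E : Submodule K M) = ∑ i ∈ s, finrank K (E i) := by
  classical
  induction s using Finset.induction_on with
  | empty => rw [Finset.sup_empty, finrank_bot, Finset.sum_empty]
  | @insert a s ha ih =>
    have hdisj : Disjoint (E a) (s.sup E) := by
      simpa only [Finset.sup_eq_iSup, Finset.mem_coe] using hE.disjoint_biSup (y := ↑s) ha
    have := Submodule.finrank_sup_add_finrank_inf_eq (E a) (s.sup E)
    rw [hdisj.eq_bot, finrank_bot, add_zero] at this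
    rw [Finset.sup_insert, this, Finset.sum_insert ha, ih]

theorem Submodule.injective_orthogonalProjectionOnto_comp_subtype {𝕜 E : Type*} [RCLike 𝕜]
    [NormedAddCommGroup E] [InnerProductSpace 𝕜 E] {V W : Submodule 𝕜 E}
    [V.HasOrthogonalProjection] (h : Disjoint W Vᗮ) :
    Function.Injective (V.orthogonalProjectionOnto.toLinearMap ∘ₗ W.subtype) := by
  rw [← LinearMap.ker_eq_bot, LinearMap.ker_eq_bot']
  rintro ⟨x, hxW⟩ hx
  have hxV : x ∈ Vᗮ := V.orthogonalProjectionOnto_eq_zero_iff.mp hx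
  simpa using h.le_bot ⟨hxW, hxV⟩

theorem LinearMap.IsSymmetric.inner_map_self_lt_of_mem_iSup_eigenspace {H : Type*}
    [NormedAddCommGroup H] [InnerProductSpace ℝ H] {T : H →ₗ[ℝ] H} (hT : T.IsSymmetric)
    {c : ℝ} {x : H} (hx : x ∈ ⨆ θ : {t : ℝ // t < c}, End.eigenspace T θ)
    (hx0 : x ≠ 0) : ⟪T x, x⟫ < c * ‖x‖ ^ 2 := by
  set E : {t : ℝ // t < c} → Submodule ℝ H := fun θ => End.eigenspace T θ
  have hE : OrthogonalFamily ℝ (fun θ => E θ) (fun θ => (E θ).subtypeₗᵢ) :=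
    hT.orthogonalFamily_eigenspaces.comp Subtype.val_injective
  obtain ⟨f, hf, hfx⟩ := (Submodule.mem_iSup_iff_exists_finsupp E x).mp hx
  let l : ∀ θ, E θ := fun θ => ⟨f θ, hf θ⟩
  have hsum : x = ∑ θ ∈ f.support, (E θ).subtypeₗᵢ (l θ) := hfx.symm
  have hTsum : T x = ∑ θ ∈ f.support, (E θ).subtypeₗᵢ (θ.1 • l θ) := by
    rw [hsum, map_sum]
    exact Finset.sum_congr rfl fun θ _ => End.mem_eigenspace_iff.mp (hf θ)
  have hquad : ⟪T x, x⟫ = ∑ θ ∈ f.support, θ.1 * ‖f θ‖ ^ 2 := by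
    rw [hTsum, hsum, hE.inner_sum]
    simp [l, real_inner_smul_left]
  have hnorm : ‖x‖ ^ 2 = ∑ θ ∈ f.support, ‖f θ‖ ^ 2 := by
    rw [hsum, hE.norm_sum]; rfl
  have hne : f.support.Nonempty := by
    rw [Finsupp.support_nonempty_iff]
    rintro rfl
    exact hx0 (hfx.symm.trans Finsupp.sum_zero_index)
  rw [hquad, hnorm, Finset.mul_sum]
  refine Finset.sum_lt_sum_of_nonempty hne fun θ hθ => ?_
  have : 0 < ‖f θ‖ ^ 2 := pow_pos (norm_pos_iff.mpr (Finsupp.mem_support_iff.mp hθ)) 2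
  exact mul_lt_mul_of_pos_right θ.2 this

theorem eigCountBelow_le_finrank {H : Type*} [NormedAddCommGroup H] [InnerProductSpace ℝ H]
    (A : H →L[ℝ] H) (hA : (A : H →ₗ[ℝ] H).IsSymmetric) (c : ℝ) (V : Submodule ℝ H)
    [FiniteDimensional ℝ V]
    (hV : ∀ g ∈ Vᗮ, c * ‖g‖ ^ 2 ≤ ⟪A g, g⟫) : eigCountBelow A c ≤ finrank ℝ V := by
  set E : {t : ℝ // t < c} → Submodule ℝ H := fun θ => End.eigenspace (A : H →ₗ[ℝ] H) θ
  have hdisj : Disjoint (⨆ θ, E θ) Vᗮ := by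
    refine Submodule.disjoint_def.mpr fun x hxE hxV => ?_
    by_contra hx0
    exact (hV x hxV).not_gt (hA.inner_map_self_lt_of_mem_iSup_eigenspace hxE hx0)
  have hinj := Submodule.injective_orthogonalProjectionOnto_comp_subtype hdisj
  have : FiniteDimensional ℝ ↥(⨆ θ, E θ) := Module.Finite.of_injective _ hinj
  have : ∀ θ, FiniteDimensional ℝ (E θ) :=
    fun θ => Submodule.finiteDimensional_of_le (le_iSup E θ)
  have hE : iSupIndep E :=
    (End.eigenspaces_iSupIndep (A : H →ₗ[ℝ] H)).comp Subtype.val_injective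
  refine tsum_le_of_sum_le' zero_le fun s => ?_
  have : ∑ θ ∈ s, finrank ℝ (E θ) ≤ finrank ℝ V := calc
    _ = finrank ℝ (s.sup E : Submodule ℝ H) := (hE.finrank_finset_sup s).symm
    _ ≤ finrank ℝ ↥(⨆ θ, E θ) := Submodule.finrank_mono (Finset.sup_le fun θ _ => le_iSup E θ)
    _ ≤ finrank ℝ V := LinearMap.finrank_le_finrank_of_injective hinj
  exact_mod_cast this

theorem stmt0_general {H : Type*} [NormedAddCommGroup H] [InnerProductSpace ℝ H] [CompleteSpace H]
    (A : H →L[ℝ] H) (hsa : IsSelfAdjoint A)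
    (V : Submodule ℝ H) [FiniteDimensional ℝ V]
    (hpos : ∀ g ∈ Vᗮ, 0 ≤ ⟪A g, g⟫) :
    eigCountBelow A 0 ≤ (Module.finrank ℝ V : ℕ∞) :=
  eigCountBelow_le_finrank A hsa.isSymmetric 0 V (by simpa using hpos)

/-- a compact self-adjoint operator `A` such that `⟪A g, g⟫ ≥ 0` on the
orthogonal complement of a finite-dimensional subspace `V` has at most `dim V` negative
eigenvalues (counted with multiplicity). -/
theorem stmt0 {H : Type*} [NormedAddCommGroup H] [InnerProductSpace ℝ H] [CompleteSpace H]
    (A : H →L[ℝ] H) (hA : IsCompactOperator A) (hsa : IsSelfAdjoint A)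
    (V : Submodule ℝ H) [FiniteDimensional ℝ V]
    (hpos : ∀ g ∈ Vᗮ, 0 ≤ ⟪A g, g⟫) :
    eigCountBelow A 0 ≤ (Module.finrank ℝ V : ℕ∞) :=
  stmt0_general A hsa V hpos
end

section
/- Let A be a compact self-adjoint operator on an infinite-dimensional Hilbert space such that for every finite-dimensional subspace V there exists g ∈ V^⊥ with ⟨A g, g⟩ < 0. Then A has infinitely many negative eigenvalues (counted with multiplicity). -/
/-!
Suppose `A` had only finitely many negative eigenvalues, counted with multiplicity. Since `A` is
compact, its eigenspaces for nonzero eigenvalues are finite-dimensional, so the negative ones span a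
finite-dimensional `A`-invariant subspace `V`, and `Vᗮ` is closed and invariant as well. By
hypothesis the quadratic form of `A` is negative somewhere on `Vᗮ`, and a compact symmetric
operator `T` whose form takes a negative value has a negative eigenvalue: the infimum `m < 0` of
the form on the unit sphere is attained. Indeed `C = T - m` is positive, so `‖C x‖² ≤ ‖C‖ ⟪C x, x⟫`
turns a minimising sequence into approximate eigenvectors for `m`, and compactness of `T` makes a
subsequence converge. The resulting eigenvector lies in `Vᗮ` and, its eigenvalue being negative,
also in `V`, which is absurd.
-/

open RealInnerProductSpace

open Filter Topology

theorem ENat.tsum_eq_top_of_support_infinite {ι : Type*} {f : ι → ℕ∞}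
    (hf : (Function.support f).Infinite) : ∑' i, f i = ⊤ := by
  have hsum : Summable f := (hasSum_of_isLUB _ isLUB_iSup).summable
  refine ENat.eq_top_iff_forall_ge.mpr fun n => ?_
  obtain ⟨t, hts, rfl⟩ := hf.exists_subset_card_eq n
  calc (t.card : ℕ∞) = ∑ _i ∈ t, 1 := by simp
    _ ≤ ∑ i ∈ t, f i := Finset.sum_le_sum fun i hi => Order.one_le_iff_ne_zero.mpr (hts hi)
    _ ≤ ∑' i, f i := hsum.sum_le_tsum t fun _ _ => zero_le

theorem Module.End.iSup_mem_invtSubmodule {R M ι : Type*} [Semiring R] [AddCommMonoid M]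
    [Module R M] (f : Module.End R M) {p : ι → Submodule R M} (hp : ∀ i, p i ∈ f.invtSubmodule) :
    (⨆ i, p i) ∈ f.invtSubmodule := by
  rw [mem_invtSubmodule_iff_map_le, Submodule.map_iSup]
  exact iSup_mono fun i => (mem_invtSubmodule_iff_map_le f).mp (hp i)

theorem IsCompactOperator.exists_apply_eq_smul_of_tendsto {𝕜 E : Type*}
    [NontriviallyNormedField 𝕜] [NormedAddCommGroup E] [NormedSpace 𝕜 E] {T : E →L[𝕜] E}
    (hT : IsCompactOperator T) {μ : 𝕜} (hμ : μ ≠ 0) {x : ℕ → E} (hx : ∀ n, ‖x n‖ = 1)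
    (h : Tendsto (fun n => T (x n) - μ • x n) atTop (𝓝 0)) :
    ∃ w ≠ 0, T w = μ • w := by
  obtain ⟨K, hK, hTK⟩ := hT.image_closedBall_subset_compact 1
  obtain ⟨y, -, φ, hφ, hy⟩ := hK.isSeqCompact fun n => hTK ⟨x n, by simp [hx n], rfl⟩
  -- `x n = μ⁻¹ • (T (x n) - (T (x n) - μ • x n))`, and both terms converge along `φ`
  have hxφ : Tendsto (fun n => x (φ n)) atTop (𝓝 (μ⁻¹ • y)) := by
    have := ((hy.sub (h.comp hφ.tendsto_atTop)).const_smul μ⁻¹)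
    simpa [Function.comp_def, smul_smul, inv_mul_cancel₀ hμ] using this
  refine ⟨μ⁻¹ • y, ?_, ?_⟩
  · have hnorm : 1 = ‖μ⁻¹ • y‖ := by simpa [hx] using hxφ.norm
    rintro h0
    simp [h0] at hnorm
  · rw [tendsto_nhds_unique ((T.continuous.tendsto _).comp hxφ) hy, smul_smul,
      mul_inv_cancel₀ hμ, one_smul]

section

variable {W : Type*} [NormedAddCommGroup W] [InnerProductSpace ℝ W]

namespace ContinuousLinearMap

theorem inner_map_smul_self (T : W →L[ℝ] W) (c : ℝ) (x : W) :
    ⟪T (c • x), c • x⟫ = c ^ 2 * ⟪T x, x⟫ := by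
  simp only [map_smul, real_inner_smul_left, real_inner_smul_right]
  ring

theorem abs_inner_map_self_le (T : W →L[ℝ] W) (x : W) : |⟪T x, x⟫| ≤ ‖T‖ * ‖x‖ ^ 2 :=
  calc |⟪T x, x⟫| ≤ ‖T x‖ * ‖x‖ := abs_real_inner_le_norm _ _
    _ ≤ ‖T‖ * ‖x‖ * ‖x‖ := by gcongr; exact T.le_opNorm x
    _ = ‖T‖ * ‖x‖ ^ 2 := by ring

variable {C : W →L[ℝ] W}

theorem IsPositive.inner_sq_le (hC : C.IsPositive) (x y : W) :
    ⟪C x, y⟫ ^ 2 ≤ ⟪C x, x⟫ * ⟪C y, y⟫ := by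
  have hquad : ∀ t : ℝ, 0 ≤ ⟪C y, y⟫ * (t * t) + 2 * ⟪C x, y⟫ * t + ⟪C x, x⟫ := by
    intro t
    have h := hC.inner_nonneg_left (x + t • y)
    have hyx : ⟪C y, x⟫ = ⟪C x, y⟫ := by
      rw [hC.inner_left_eq_inner_right, real_inner_comm]
    simp only [map_add, map_smul, inner_add_left, inner_add_right, real_inner_smul_left,
      real_inner_smul_right, hyx] at h
    linarith
  have := discrim_le_zero hquad
  rw [discrim] at this
  nlinarith

theorem IsPositive.norm_apply_sq_le (hC : C.IsPositive) (x : W) :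
    ‖C x‖ ^ 2 ≤ ‖C‖ * ⟪C x, x⟫ := by
  rcases (norm_nonneg (C x)).eq_or_lt with h0 | hpos
  · rw [← h0, sq, zero_mul]
    exact mul_nonneg (norm_nonneg C) (hC.inner_nonneg_left x)
  have hCCx : ⟪C (C x), C x⟫ ≤ ‖C‖ * ‖C x‖ ^ 2 :=
    calc ⟪C (C x), C x⟫ ≤ ‖C (C x)‖ * ‖C x‖ := real_inner_le_norm _ _
      _ ≤ ‖C‖ * ‖C x‖ * ‖C x‖ := by gcongr; exact C.le_opNorm _
      _ = ‖C‖ * ‖C x‖ ^ 2 := by ring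
  have h := hC.inner_sq_le x (C x)
  rw [real_inner_self_eq_norm_sq] at h
  have : ‖C x‖ ^ 2 * ‖C x‖ ^ 2 ≤ ‖C‖ * ⟪C x, x⟫ * ‖C x‖ ^ 2 := by
    nlinarith [mul_le_mul_of_nonneg_left hCCx (hC.inner_nonneg_left x)]
  exact le_of_mul_le_mul_right this (by positivity)

theorem IsPositive.tendsto_apply_nhds_zero (hC : C.IsPositive) {ι : Type*} {l : Filter ι}
    {x : ι → W} (h : Tendsto (fun i => ⟪C (x i), x i⟫) l (𝓝 0)) :
    Tendsto (fun i => C (x i)) l (𝓝 0) := by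
  have hsq : Tendsto (fun i => ‖C (x i)‖ ^ 2) l (𝓝 0) := by
    refine squeeze_zero (fun _ => by positivity) (fun i => hC.norm_apply_sq_le (x i)) ?_
    simpa using h.const_mul ‖C‖
  rw [tendsto_zero_iff_norm_tendsto_zero]
  simpa using hsq.sqrt

theorem bddBelow_image_inner_self_sphere (T : W →L[ℝ] W) :
    BddBelow ((fun x => ⟪T x, x⟫) '' Metric.sphere 0 1) := by
  refine ⟨-‖T‖, ?_⟩
  rintro _ ⟨x, hx, rfl⟩
  rw [mem_sphere_zero_iff_norm] at hx
  simpa [hx] using neg_le_of_abs_le (T.abs_inner_map_self_le x)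

theorem sInf_image_inner_self_sphere_mul_le (T : W →L[ℝ] W) (x : W) :
    sInf ((fun y => ⟪T y, y⟫) '' Metric.sphere 0 1) * ‖x‖ ^ 2 ≤ ⟪T x, x⟫ := by
  rcases eq_or_ne x 0 with rfl | hx
  · simp
  have hx' : ‖x‖ ≠ 0 := norm_ne_zero_iff.mpr hx
  have hu : ‖x‖⁻¹ • x ∈ Metric.sphere (0 : W) 1 := by
    rw [mem_sphere_zero_iff_norm, norm_smul, norm_inv, norm_norm, inv_mul_cancel₀ hx']
  calc _ ≤ ⟪T (‖x‖⁻¹ • x), ‖x‖⁻¹ • x⟫ * ‖x‖ ^ 2 := by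
        gcongr; exact csInf_le T.bddBelow_image_inner_self_sphere ⟨_, hu, rfl⟩
    _ = ⟪T x, x⟫ := by rw [T.inner_map_smul_self]; field_simp

end ContinuousLinearMap

theorem IsCompactOperator.exists_neg_eigenvector_of_inner_neg {T : W →L[ℝ] W}
    (hT : IsCompactOperator T) (hsym : T.IsSymmetric) {g : W} (hg : ⟪T g, g⟫ < 0) :
    ∃ μ < (0 : ℝ), ∃ w ≠ 0, T w = μ • w := by
  set m := sInf ((fun x => ⟪T x, x⟫) '' Metric.sphere 0 1)
  have hmin := T.sInf_image_inner_self_sphere_mul_le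
  have hm : m < 0 := by nlinarith [hmin g, sq_nonneg ‖g‖]
  have : Nontrivial W := nontrivial_of_ne g 0 (by rintro rfl; simp at hg)
  obtain ⟨v, -, hv, hvQ⟩ := exists_seq_tendsto_sInf
    ((NormedSpace.sphere_nonempty.mpr zero_le_one).image _) T.bddBelow_image_inner_self_sphere
  choose x hx hxv using hvQ
  set C : W →L[ℝ] W := T - m • ContinuousLinearMap.id ℝ W
  have hCinner (y : W) : ⟪C y, y⟫ = ⟪T y, y⟫ - m * ‖y‖ ^ 2 := by
    simp only [C, sub_apply, smul_apply, ContinuousLinearMap.id_apply, inner_sub_left,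
      real_inner_smul_left, real_inner_self_eq_norm_sq]
  have hC : C.IsPositive := by
    refine (ContinuousLinearMap.isPositive_iff C).mpr ⟨?_, fun y => ?_⟩
    · exact hsym.sub (LinearMap.IsSymmetric.id.smul (conj_trivial m))
    · exact (hCinner y).symm ▸ sub_nonneg.mpr (hmin y)
  have hxn (n : ℕ) : ‖x n‖ = 1 := mem_sphere_zero_iff_norm.mp (hx n)
  have hCx : Tendsto (fun n => ⟪C (x n), x n⟫) atTop (𝓝 0) := by
    have := hv.sub_const m
    rw [sub_self] at this
    simpa [hCinner, hxn, ← hxv] using this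
  obtain ⟨w, hw, hTw⟩ := hT.exists_apply_eq_smul_of_tendsto hm.ne hxn
    (by simpa [C] using hC.tendsto_apply_nhds_zero hCx)
  exact ⟨m, hm, w, hw, hTw⟩

theorem IsCompactOperator.exists_neg_eigenvector_mem_of_inner_neg {T : W →L[ℝ] W}
    (hT : IsCompactOperator T) (hsym : T.IsSymmetric) {U : Submodule ℝ W}
    (hU : IsClosed (U : Set W)) (hTU : U ∈ Module.End.invtSubmodule (T : W →ₗ[ℝ] W)) {g : W}
    (hgU : g ∈ U) (hg : ⟪T g, g⟫ < 0) :
    ∃ μ < (0 : ℝ), ∃ w ∈ U, w ≠ 0 ∧ T w = μ • w := by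
  rw [Module.End.mem_invtSubmodule_iff_forall_mem_of_mem] at hTU
  obtain ⟨μ, hμ, w, hw0, hTw⟩ := IsCompactOperator.exists_neg_eigenvector_of_inner_neg
    (T := T.restrict hTU) (hT.restrict hTU hU) (hsym.restrict_invariant hTU) (g := ⟨g, hgU⟩) hg
  exact ⟨μ, hμ, w, w.2, by simpa using hw0, congrArg Subtype.val hTw⟩

end

theorem stmt4_general {H : Type*} [NormedAddCommGroup H] [InnerProductSpace ℝ H] [CompleteSpace H]
    (A : H →L[ℝ] H) (hA : IsCompactOperator A) (hsa : IsSelfAdjoint A)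
    (hneg : ∀ V : Submodule ℝ H, FiniteDimensional ℝ V → ∃ g ∈ Vᗮ, ⟪A g, g⟫ < 0) :
    eigCountBelow A 0 = ⊤ := by
  have hfd (θ : {t : ℝ // t < 0}) :
      FiniteDimensional ℝ (Module.End.eigenspace (A : H →ₗ[ℝ] H) θ) :=
    ContinuousLinearMap.finite_dimensional_eigenspace hA θ.1 θ.2.ne
  refine ENat.tsum_eq_top_of_support_infinite fun hfin => ?_
  set S := Function.support fun θ : {t : ℝ // t < 0} =>
    (Module.finrank ℝ (Module.End.eigenspace (A : H →ₗ[ℝ] H) θ.1) : ℕ∞)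
  have : Finite S := hfin.to_subtype
  set V : Submodule ℝ H := ⨆ θ : S, Module.End.eigenspace (A : H →ₗ[ℝ] H) θ.1.1
  obtain ⟨g, hgV, hg⟩ := hneg V (Submodule.finiteDimensional_iSup _)
  have hVinv : Vᗮ ∈ Module.End.invtSubmodule (A : H →ₗ[ℝ] H) :=
    hsa.isSymmetric.orthogonalComplement_mem_invtSubmodule
      (Module.End.iSup_mem_invtSubmodule _ fun θ => Module.End.eigenspace_mem_invtSubmodule _ _)
  obtain ⟨μ, hμ, w, hwV', hw0, hAw⟩ := hA.exists_neg_eigenvector_mem_of_inner_neg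
    hsa.isSymmetric (Submodule.isClosed_orthogonal V) hVinv hgV hg
  have hwE : w ∈ Module.End.eigenspace (A : H →ₗ[ℝ] H) μ := Module.End.mem_eigenspace_iff.mpr hAw
  have hμS : (⟨μ, hμ⟩ : {t : ℝ // t < 0}) ∈ S := by
    have := hfd ⟨μ, hμ⟩
    simp only [S, Function.mem_support, ne_eq, Nat.cast_eq_zero, Submodule.finrank_eq_zero]
    exact (Submodule.ne_bot_iff _).mpr ⟨w, hwE, hw0⟩
  have hwV : w ∈ V := Submodule.mem_iSup_of_mem (⟨⟨μ, hμ⟩, hμS⟩ : S) hwE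
  exact hw0 ((Submodule.mem_bot ℝ).mp (V.inf_orthogonal_eq_bot ▸ ⟨hwV, hwV'⟩))

/-- a compact self-adjoint operator on an infinite-dimensional Hilbert space
whose quadratic form takes a negative value on the orthogonal complement of every
finite-dimensional subspace has infinitely many negative eigenvalues (with multiplicity). -/
theorem stmt4 {H : Type*} [NormedAddCommGroup H] [InnerProductSpace ℝ H] [CompleteSpace H]
    (hinf : ¬ FiniteDimensional ℝ H)
    (A : H →L[ℝ] H) (hA : IsCompactOperator A) (hsa : IsSelfAdjoint A)
    (hneg : ∀ V : Submodule ℝ H, FiniteDimensional ℝ V → ∃ g ∈ Vᗮ, ⟪A g, g⟫ < 0) :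
    eigCountBelow A 0 = ⊤ :=
  stmt4_general A hA hsa hneg
end
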